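/- arXiv:2201.09262 — 2 statements merged into one kernel-verified Lean document; each statement's English description precedes it below -/
import Mathlib

section
/- For every positive integer n, the multiple zeta value ζ(2,2,...,2) with n twos equals π^(2n)/(2n+1)!. -/
/-!
Expanding Euler's product `sin (π x) / (π x) = ∏_{k ≥ 1} (1 - x² / k²)` as an absolutely
convergent sum over finite sets of indices and grouping the sets by cardinality gives
`sin (π x) / (π x) = ∑_r (-1)^r ζ(2,…,2) x^{2r}` with `r` twos. The Taylor series of `sin` gives
the same function as `∑_r (-1)^r π^{2r} / (2r+1)! x^{2r}`, and both are power series in `t = x²`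
that agree for `t > 0`, so their coefficients coincide.
-/

open Real Filter Topology Finset FormalMultilinearSeries

noncomputable def tsumEsymm {ι R : Type*} [CommSemiring R] [TopologicalSpace R] (f : ι → R)
    (r : ℕ) : R :=
  ∑' s : Set.powersetCard ι r, ∏ i ∈ (s : Finset ι), f i

theorem hasSum_tsumEsymm {ι R : Type*} [NormedCommRing R] [NormOneClass R] [CompleteSpace R]
    {f : ι → R} (hf : Summable (‖f ·‖)) : HasSum (tsumEsymm f) (∏' i, (1 + f i)) := by
  rw [tprod_one_add (summable_finsetProd_of_summable_norm hf)]
  exact (summable_finsetProd_of_summable_norm hf).hasSum.tsum_fiberwise Finset.card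

theorem tsumEsymm_const_mul {ι K : Type*} [Semifield K] [TopologicalSpace K]
    [IsTopologicalSemiring K] [T2Space K] (c : K) (f : ι → K) (r : ℕ) :
    tsumEsymm (fun i => c * f i) r = c ^ r * tsumEsymm f r := by
  rw [tsumEsymm, tsumEsymm, ← tsum_mul_left]
  congr! with s
  rw [prod_mul_distrib, prod_const, Set.powersetCard.card_eq]

/-- Sets containing `0` contribute nothing because `φ 0 = 0`; the others are exactly the ranges
of the strictly increasing positive sequences. -/
theorem tsum_strictMono_eq_tsumEsymm {R : Type*} [CommSemiring R] [TopologicalSpace R]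
    {φ : ℕ → R} (hφ : φ 0 = 0) (n : ℕ) :
    ∑' f : {f : Fin n → ℕ // StrictMono f ∧ ∀ i, 0 < f i}, ∏ i, φ (f.1 i) = tsumEsymm φ n := by
  let range (f : {f : Fin n → ℕ // StrictMono f ∧ ∀ i, 0 < f i}) : Set.powersetCard ℕ n :=
    Set.powersetCard.ofFinEmb n ℕ ⟨f.1, f.2.1.injective⟩
  have hinj : Function.Injective range := by
    intro f g hfg
    have := congrArg SetLike.coe hfg
    simp only [range, Set.powersetCard.coe_ofFinEmb, Function.Embedding.coeFn_mk] at this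
    exact Subtype.ext ((f.2.1.range_inj g.2.1).mp this)
  have hsupp : (Function.support fun s : Set.powersetCard ℕ n => ∏ k ∈ (s : Finset ℕ), φ k)
      ⊆ Set.range range := by
    intro s hs
    have h0 : 0 ∉ (s : Finset ℕ) := fun h0 => hs (prod_eq_zero h0 hφ)
    refine ⟨⟨s.1.orderEmbOfFin s.2, (s.1.orderEmbOfFin s.2).strictMono, fun i => ?_⟩, ?_⟩
    · exact Nat.pos_of_ne_zero fun h => h0 (h ▸ s.1.orderEmbOfFin_mem s.2 i)
    · apply SetLike.coe_injective
      simpa [range] using s.1.range_orderEmbOfFin s.2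
  rw [tsumEsymm, ← hinj.tsum_eq hsupp]
  congr! with f
  simp [range, Set.powersetCard.val_ofFinEmb, prod_map]

theorem ofScalars_eq_of_frequently_tsum_eq {𝕜 : Type*} [NontriviallyNormedField 𝕜]
    [CompleteSpace 𝕜] {a b : ℕ → 𝕜} (ha : 0 < (ofScalars 𝕜 a).radius)
    (hb : 0 < (ofScalars 𝕜 b).radius)
    (h : ∃ᶠ t in 𝓝[≠] 0, ∑' n, a n * t ^ n = ∑' n, b n * t ^ n) : a = b := by
  have hsum (c : ℕ → 𝕜) : (ofScalars 𝕜 c).sum = fun t => ∑' n, c n * t ^ n :=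
    ofScalarsSum_eq_tsum c
  have hfa := (ofScalars 𝕜 a).hasFPowerSeriesOnBall ha
  have hfb := (ofScalars 𝕜 b).hasFPowerSeriesOnBall hb
  have heq := (hfa.analyticAt.frequently_eq_iff_eventually_eq hfb.analyticAt).mp
    (by simpa only [hsum] using h)
  exact ofScalars_series_injective 𝕜 𝕜
    (hfa.hasFPowerSeriesAt.eq_formalMultilinearSeries_of_eventually hfb.hasFPowerSeriesAt heq)

theorem one_le_radius_ofScalars {𝕜 : Type*} [NontriviallyNormedField 𝕜] {a : ℕ → 𝕜}
    (ha : Summable (‖a ·‖)) : 1 ≤ (ofScalars 𝕜 a).radius := by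
  simpa using (ofScalars 𝕜 a).le_radius_of_summable_norm (r := 1)
    (by simpa [ofScalars_norm] using ha)

theorem summable_norm_sq_div_sq (x : ℝ) : Summable fun k : ℕ => ‖x ^ 2 / (k : ℝ) ^ 2‖ := by
  simpa [div_eq_mul_inv] using (Real.summable_nat_pow_inv.mpr one_lt_two).mul_left (x ^ 2)

/-- The factor `k = 0` is `1`, since `x ^ 2 / 0 = 0`. -/
theorem hasProd_one_sub_sq_div_sq {x : ℝ} (hx : x ≠ 0) :
    HasProd (fun k : ℕ => 1 - x ^ 2 / (k : ℝ) ^ 2) (sin (π * x) / (π * x)) := by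
  have hmult : Multipliable fun k : ℕ => 1 - x ^ 2 / (k : ℝ) ^ 2 := by
    simpa [sub_eq_add_neg] using multipliable_one_add_of_summable
      (f := fun k : ℕ => -(x ^ 2 / (k : ℝ) ^ 2)) (by simpa using summable_norm_sq_div_sq x)
  rw [hmult.hasProd_iff_tendsto_nat, ← tendsto_add_atTop_iff_nat 1]
  refine ((tendsto_euler_sin_prod x).div_const (π * x)).congr fun N => ?_
  rw [prod_range_succ', mul_div_right_comm, div_self (mul_ne_zero pi_ne_zero hx)]
  simp

theorem hasSum_sinc_tsumEsymm {x : ℝ} (hx : x ≠ 0) :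
    HasSum (fun r : ℕ => (-1) ^ r * tsumEsymm (fun k : ℕ => 1 / (k : ℝ) ^ 2) r * (x ^ 2) ^ r)
      (sin (π * x) / (π * x)) := by
  have h := hasSum_tsumEsymm (f := fun k : ℕ => -x ^ 2 * (1 / (k : ℝ) ^ 2))
    (by simpa [← div_eq_mul_inv] using summable_norm_sq_div_sq x)
  have hprod : ∏' k : ℕ, (1 + -x ^ 2 * (1 / (k : ℝ) ^ 2)) = sin (π * x) / (π * x) :=
    (tprod_congr fun k => by ring).trans (hasProd_one_sub_sq_div_sq hx).tprod_eq
  rw [hprod] at h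
  refine h.congr_fun fun r => ?_
  rw [tsumEsymm_const_mul, neg_pow]
  ring

theorem hasSum_sinc {x : ℝ} (hx : x ≠ 0) :
    HasSum (fun r : ℕ => (-1) ^ r * (π ^ (2 * r) / (2 * r + 1).factorial) * (x ^ 2) ^ r)
      (sin (π * x) / (π * x)) := by
  refine ((hasSum_sin (π * x)).div_const (π * x)).congr_fun fun r => ?_
  field_simp
  ring

theorem summable_tsumEsymm_one_div_sq : Summable (tsumEsymm fun k : ℕ => 1 / (k : ℝ) ^ 2) :=
  (hasSum_tsumEsymm (by simp)).summable

theorem summable_pi_pow_div_factorial :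
    Summable fun r : ℕ => π ^ (2 * r) / (2 * r + 1).factorial := by
  refine (Real.summable_pow_div_factorial (π ^ 2)).of_nonneg_of_le (fun r => by positivity)
    fun r => ?_
  rw [← pow_mul]
  exact div_le_div_of_nonneg_left (by positivity) (by positivity)
    (by exact_mod_cast Nat.factorial_le (by omega))

theorem zeta_two_pow_general (n : ℕ) :
    (∑' f : {f : Fin n → ℕ // StrictMono f ∧ ∀ i, 0 < f i},
      ∏ i, 1 / ((f.1 i : ℝ)) ^ 2) = π ^ (2 * n) / (Nat.factorial (2 * n + 1)) := by
  have hfreq : ∃ᶠ t in 𝓝[≠] (0 : ℝ),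
      ∑' r, (-1) ^ r * tsumEsymm (fun k : ℕ => 1 / (k : ℝ) ^ 2) r * t ^ r
        = ∑' r, (-1) ^ r * (π ^ (2 * r) / (2 * r + 1).factorial) * t ^ r := by
    refine (Eventually.frequently ?_).filter_mono (nhdsGT_le_nhdsNE 0)
    filter_upwards [self_mem_nhdsWithin] with t (ht : 0 < t)
    have hx : √t ≠ 0 := (sqrt_pos.mpr ht).ne'
    rw [← sq_sqrt ht.le]
    exact (hasSum_sinc_tsumEsymm hx).tsum_eq.trans (hasSum_sinc hx).tsum_eq.symm
  have hcoeff := ofScalars_eq_of_frequently_tsum_eq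
    (one_pos.trans_le (one_le_radius_ofScalars
      (by simpa [norm_mul] using summable_tsumEsymm_one_div_sq.norm)))
    (one_pos.trans_le (one_le_radius_ofScalars
      (by simpa [norm_mul] using summable_pi_pow_div_factorial.norm)))
    hfreq
  rw [tsum_strictMono_eq_tsumEsymm (φ := fun k : ℕ => 1 / (k : ℝ) ^ 2) (by simp) n]
  exact mul_left_cancel₀ (pow_ne_zero n (by norm_num)) (congrFun hcoeff n)

theorem zeta_two_pow (n : ℕ) (hn : 0 < n) :
    (∑' f : {f : Fin n → ℕ // StrictMono f ∧ ∀ i, 0 < f i},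
      ∏ i, 1 / ((f.1 i : ℝ)) ^ 2) = π ^ (2 * n) / (Nat.factorial (2 * n + 1)) :=
  zeta_two_pow_general n
end

section
/- For all nonnegative integers n and b, ∫₀^(π/2) cos^(2n)(x) · (2x)^(2b)/(2b)! dx = (C(2n,n)/4^n) · (π/2) · Σ_{n < m₁ < ... < m_b} 1/(m₁² ⋯ m_b²), where the empty sum (b = 0) is interpreted as 1. -/
open Real

/-- `∑_{n < m₁ < ⋯ < m_b} 1/(m₁² ⋯ m_b²)`; equals `1` when `b = 0`. -/
noncomputable def zetaTail (b n : ℕ) : ℝ :=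
  ∑' f : {f : Fin b → ℕ // StrictMono f ∧ ∀ i, n < f i}, ∏ i, 1 / ((f.1 i : ℝ)) ^ 2

/-!
Put `K n b := ∫ cos^(2n) x · (2x)^(2b)/(2b)! / ∫ cos^(2n) x` (integrals over `[0, π/2]`).
Integration by parts gives `K n (b+1) = K (n+1) (b+1) + K (n+1) b / (n+1)²`, and Jordan's
inequality `2x ≤ π sin x` gives `K N (b+1) = O(1/N)`, so telescoping in `n` yields
`K n (b+1) = ∑_{m > n} K m b / m²`. Splitting off the smallest index `m₁` shows that `zetaTail`
obeys the same recursion with the same initial value `1` at `b = 0`, hence `K n b = zetaTail b n`;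
Wallis' formula `∫ cos^(2n) x = C(2n,n)/4^n · π/2` finishes the proof.
-/

open Filter Topology

abbrev IncTuple (b n : ℕ) := {f : Fin b → ℕ // StrictMono f ∧ ∀ i, n < f i}

noncomputable def invSqProd {b : ℕ} (f : Fin b → ℕ) : ℝ := ∏ i, 1 / (f i : ℝ) ^ 2

lemma invSqProd_nonneg {b : ℕ} (f : Fin b → ℕ) : 0 ≤ invSqProd f :=
  Finset.prod_nonneg fun _ _ => by positivity

lemma invSqProd_cons {b : ℕ} (m : ℕ) (g : Fin b → ℕ) :
    invSqProd (Fin.cons m g : Fin (b + 1) → ℕ) = invSqProd g / (m : ℝ) ^ 2 := by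
  simp [invSqProd, Fin.prod_univ_succ, div_eq_inv_mul, mul_comm]

def IncTuple.consEquiv (b n : ℕ) :
    IncTuple (b + 1) n ≃ Σ m : {m : ℕ // n < m}, IncTuple b m where
  toFun f := ⟨⟨f.1 0, f.2.2 0⟩,
    ⟨Fin.tail f.1, f.2.1.comp Fin.strictMono_succ, fun i => f.2.1 (Fin.succ_pos i)⟩⟩
  invFun p := ⟨Fin.cons p.1.1 p.2.1, Fin.strictMono_cons.2 ⟨p.2.2.2, p.2.2.1⟩,
    Fin.forall_fin_succ.2 ⟨p.1.2, fun i => p.1.2.trans (p.2.2.2 i)⟩⟩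
  left_inv f := Subtype.ext (Fin.cons_self_tail f.1)
  right_inv _ := rfl

lemma hasSum_of_eq_add_of_tendsto_zero {a d : ℕ → ℝ} (hd : ∀ k, 0 ≤ d k)
    (had : ∀ k, a k = a (k + 1) + d k) (ha : Tendsto a atTop (𝓝 0)) : HasSum d (a 0) := by
  have hpartial : ∀ N, ∑ k ∈ Finset.range N, d k = a 0 - a N := fun N => by
    rw [← Finset.sum_range_sub']
    exact Finset.sum_congr rfl fun k _ => by linarith [had k]
  rw [hasSum_iff_tendsto_nat_of_nonneg hd]
  simpa [hpartial] using tendsto_const_nhds.sub ha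

lemma hasSum_div_sq_of_recurrence {K : ℕ → ℕ → ℝ} (hK : ∀ n b, 0 ≤ K n b)
    (hrec : ∀ n b, K n (b + 1) = K (n + 1) (b + 1) + K (n + 1) b / ((n : ℝ) + 1) ^ 2)
    (hlim : ∀ b, Tendsto (fun N => K N (b + 1)) atTop (𝓝 0)) (n b : ℕ) :
    HasSum (fun m : {m : ℕ // n < m} => K m b / (m : ℝ) ^ 2) (K n (b + 1)) := by
  let e : ℕ → {m : ℕ // n < m} := fun k => ⟨n + k + 1, by omega⟩
  have he : Function.Injective e := fun k l h => by simpa [e] using congrArg Subtype.val h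
  refine (he.hasSum_iff fun m hm =>
    absurd ⟨m.1 - n - 1, Subtype.ext (by simp only [e]; omega)⟩ hm).1 ?_
  refine hasSum_of_eq_add_of_tendsto_zero (a := fun k => K (n + k) (b + 1))
    (fun k => div_nonneg (hK _ _) (sq_nonneg _)) (fun k => ?_)
    ((hlim b).comp (tendsto_atTop_mono (fun k => Nat.le_add_left k n) tendsto_id))
  simpa [e, ← add_assoc] using hrec (n + k) b

theorem hasSum_invSqProd_of_recurrence {K : ℕ → ℕ → ℝ} (h0 : ∀ n, K n 0 = 1)
    (hK : ∀ n b, 0 ≤ K n b)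
    (hrec : ∀ n b, K n (b + 1) = K (n + 1) (b + 1) + K (n + 1) b / ((n : ℝ) + 1) ^ 2)
    (hlim : ∀ b, Tendsto (fun N => K N (b + 1)) atTop (𝓝 0)) (b n : ℕ) :
    HasSum (fun f : IncTuple b n => invSqProd f.1) (K n b) := by
  induction b generalizing n with
  | zero =>
    let f₀ : IncTuple 0 n := ⟨Fin.elim0, fun i => i.elim0, fun i => i.elim0⟩
    simpa [h0, invSqProd] using
      hasSum_single (f := fun f : IncTuple 0 n => invSqProd f.1) f₀
        fun f hf => (hf (Subsingleton.elim f f₀)).elim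
  | succ b ih =>
    have hfiber (m : {m : ℕ // n < m}) :
        HasSum (fun g : IncTuple b m => invSqProd g.1 / (m : ℝ) ^ 2) (K m b / (m : ℝ) ^ 2) :=
      (ih m).div_const _
    have hbase := hasSum_div_sq_of_recurrence hK hrec hlim n b
    have hsummable : Summable fun p : Σ m : {m : ℕ // n < m}, IncTuple b m =>
        invSqProd p.2.1 / (p.1 : ℝ) ^ 2 :=
      (summable_sigma_of_nonneg fun p => div_nonneg (invSqProd_nonneg _) (sq_nonneg _)).2
        ⟨fun m => (hfiber m).summable, by simpa only [(hfiber _).tsum_eq] using hbase.summable⟩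
    refine (IncTuple.consEquiv b n).symm.hasSum_iff.1 ?_
    convert hbase.sigma_of_hasSum hfiber hsummable using 2 with p
    exact invSqProd_cons p.1 p.2.1

theorem zetaTail_eq_of_recurrence {K : ℕ → ℕ → ℝ} (h0 : ∀ n, K n 0 = 1)
    (hK : ∀ n b, 0 ≤ K n b)
    (hrec : ∀ n b, K n (b + 1) = K (n + 1) (b + 1) + K (n + 1) b / ((n : ℝ) + 1) ^ 2)
    (hlim : ∀ b, Tendsto (fun N => K N (b + 1)) atTop (𝓝 0)) (b n : ℕ) :
    zetaTail b n = K n b :=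
  (hasSum_invSqProd_of_recurrence h0 hK hrec hlim b n).tsum_eq

noncomputable def expTwoTerm (m : ℕ) (x : ℝ) : ℝ := (2 * x) ^ m / m.factorial

@[fun_prop]
lemma continuous_expTwoTerm (m : ℕ) : Continuous (expTwoTerm m) := by
  unfold expTwoTerm; fun_prop

lemma expTwoTerm_zero (x : ℝ) : expTwoTerm 0 x = 1 := by
  simp [expTwoTerm]

lemma expTwoTerm_succ_zero (m : ℕ) : expTwoTerm (m + 1) 0 = 0 := by
  simp [expTwoTerm]

lemma expTwoTerm_nonneg (m : ℕ) {x : ℝ} (hx : 0 ≤ x) : 0 ≤ expTwoTerm m x := by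
  unfold expTwoTerm; positivity

lemma hasDerivAt_expTwoTerm_succ (m : ℕ) (x : ℝ) :
    HasDerivAt (expTwoTerm (m + 1)) (2 * expTwoTerm m x) x := by
  have h := (((hasDerivAt_id x).const_mul 2).pow (m + 1)).div_const ((m + 1).factorial : ℝ)
  refine h.congr_deriv ?_
  simp only [expTwoTerm, id, Nat.add_sub_cancel, Nat.factorial_succ]
  push_cast
  field_simp

lemma expTwoTerm_add_two_le {m : ℕ} {x : ℝ} (hx₀ : 0 ≤ x) (hx : x ≤ π / 2) :
    expTwoTerm (m + 2) x ≤ π ^ (m + 2) * sin x ^ 2 := by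
  have hjordan : 2 * x ≤ π * sin x := by
    have := mul_le_sin hx₀ hx
    rw [div_mul_eq_mul_div, div_le_iff₀ pi_pos] at this
    linarith
  calc expTwoTerm (m + 2) x ≤ (2 * x) ^ m * (2 * x) ^ 2 := by
        rw [expTwoTerm, ← pow_add]
        exact div_le_self (by positivity) (mod_cast (m + 2).factorial_pos)
    _ ≤ π ^ m * (π * sin x) ^ 2 := by
        gcongr
        · linarith
    _ = π ^ (m + 2) * sin x ^ 2 := by ring

noncomputable def cosMoment (n m : ℕ) : ℝ :=
  ∫ x in (0 : ℝ)..π / 2, cos x ^ (2 * n) * expTwoTerm m x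

lemma cosMoment_nonneg (n m : ℕ) : 0 ≤ cosMoment n m :=
  intervalIntegral.integral_nonneg (by positivity) fun x hx =>
    mul_nonneg ((even_two_mul n).pow_nonneg _) (expTwoTerm_nonneg m hx.1)

lemma centralBinom_div_four_pow_succ (n : ℕ) :
    ((2 * (n + 1)).choose (n + 1) : ℝ) / 4 ^ (n + 1)
      = (2 * n).choose n / 4 ^ n * ((2 * n + 1) / (2 * n + 2)) := by
  have h : ((n : ℝ) + 1) * (2 * (n + 1)).choose (n + 1) = 2 * (2 * n + 1) * (2 * n).choose n := by
    exact_mod_cast Nat.succ_mul_centralBinom_succ n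
  field_simp
  linear_combination (2 * 4 ^ n : ℝ) * h

lemma integral_cos_pow_two_mul (n : ℕ) :
    ∫ x in (0 : ℝ)..π / 2, cos x ^ (2 * n) = (2 * n).choose n / 4 ^ n * (π / 2) := by
  have hprod :
      ∏ i ∈ Finset.range n, (2 * (i : ℝ) + 1) / (2 * i + 2) = (2 * n).choose n / 4 ^ n := by
    induction n with
    | zero => simp
    | succ k ih => rw [Finset.prod_range_succ, ih, centralBinom_div_four_pow_succ]
  rw [EulerSine.integral_cos_pow_eq, integral_sin_pow_even, hprod]
  ring

lemma cosMoment_zero (n : ℕ) : cosMoment n 0 = (2 * n).choose n / 4 ^ n * (π / 2) := by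
  simp [cosMoment, expTwoTerm_zero, integral_cos_pow_two_mul]

lemma cosMoment_zero_pos (n : ℕ) : 0 < cosMoment n 0 := by
  have := Nat.choose_pos (show n ≤ 2 * n by omega)
  rw [cosMoment_zero]
  positivity [pi_pos]

lemma cosMoment_succ_zero (n : ℕ) :
    cosMoment (n + 1) 0 = (2 * n + 1) / (2 * n + 2) * cosMoment n 0 := by
  rw [cosMoment_zero, cosMoment_zero, centralBinom_div_four_pow_succ]
  ring

lemma hasDerivAt_cosMoment_primitive (n m : ℕ) (x : ℝ) :
    HasDerivAt
      (fun x => -(cos x ^ (2 * n + 1) * sin x * expTwoTerm (m + 2) x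
        + cos x ^ (2 * (n + 1)) * expTwoTerm (m + 1) x / (n + 1)) / (2 * n + 1))
      (cos x ^ (2 * n) * expTwoTerm (m + 2) x
        - (2 * n + 2) / (2 * n + 1) * (cos x ^ (2 * (n + 1)) * expTwoTerm (m + 2) x)
        - 2 / ((2 * n + 1) * (n + 1)) * (cos x ^ (2 * (n + 1)) * expTwoTerm m x)) x := by
  have h1 := (((hasDerivAt_cos x).pow (2 * n + 1)).mul (hasDerivAt_sin x)).mul
    (hasDerivAt_expTwoTerm_succ (m + 1) x)
  have h2 := (((hasDerivAt_cos x).pow (2 * (n + 1))).mul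
    (hasDerivAt_expTwoTerm_succ m x)).div_const ((n : ℝ) + 1)
  refine ((h1.add h2).neg.div_const _).congr_deriv ?_
  simp only [Pi.mul_apply, Pi.pow_apply]
  rw [show 2 * (n + 1) - 1 = 2 * n + 1 by omega, Nat.add_sub_cancel]
  -- the `sin x ^ 2` coming from `d/dx cos x ^ (2n+1)` is traded for `1 - cos x ^ 2`
  linear_combination (norm := skip)
    (cos x ^ (2 * n) * expTwoTerm (m + 2) x) * sin_sq_add_cos_sq x
  push_cast
  field_simp
  ring

lemma cosMoment_add_two (n m : ℕ) :
    cosMoment n (m + 2) = (2 * n + 2) / (2 * n + 1) * cosMoment (n + 1) (m + 2)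
      + 2 / ((2 * n + 1) * (n + 1)) * cosMoment (n + 1) m := by
  have hint (k j : ℕ) :
      IntervalIntegrable (fun x => cos x ^ k * expTwoTerm j x) MeasureTheory.volume 0 (π / 2) :=
    Continuous.intervalIntegrable (by fun_prop) _ _
  have hFTC := intervalIntegral.integral_eq_sub_of_hasDerivAt
    (fun x _ => hasDerivAt_cosMoment_primitive n m x)
    (Continuous.intervalIntegrable (by fun_prop) 0 (π / 2))
  have hzero : ∫ x in (0 : ℝ)..π / 2, (cos x ^ (2 * n) * expTwoTerm (m + 2) x
      - (2 * n + 2) / (2 * n + 1) * (cos x ^ (2 * (n + 1)) * expTwoTerm (m + 2) x)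
      - 2 / ((2 * n + 1) * (n + 1)) * (cos x ^ (2 * (n + 1)) * expTwoTerm m x)) = 0 := by
    rw [hFTC]
    simp [expTwoTerm_succ_zero]
  rw [intervalIntegral.integral_sub ((hint _ _).sub ((hint _ _).const_mul _))
      ((hint _ _).const_mul _), intervalIntegral.integral_sub (hint _ _) ((hint _ _).const_mul _),
    intervalIntegral.integral_const_mul, intervalIntegral.integral_const_mul] at hzero
  simp only [cosMoment]
  linarith

lemma integral_cos_pow_mul_sin_sq (n : ℕ) :
    ∫ x in (0 : ℝ)..π / 2, cos x ^ (2 * n) * sin x ^ 2 = cosMoment n 0 / (2 * n + 2) := by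
  have hsplit (x : ℝ) : cos x ^ (2 * n) * sin x ^ 2
      = cos x ^ (2 * n) * expTwoTerm 0 x - cos x ^ (2 * (n + 1)) * expTwoTerm 0 x := by
    rw [sin_sq, expTwoTerm_zero]; ring
  simp only [hsplit]
  rw [intervalIntegral.integral_sub (Continuous.intervalIntegrable (by fun_prop) _ _)
    (Continuous.intervalIntegrable (by fun_prop) _ _)]
  change cosMoment n 0 - cosMoment (n + 1) 0 = _
  rw [cosMoment_succ_zero]
  field_simp
  ring

lemma cosMoment_add_two_le (n m : ℕ) :
    cosMoment n (m + 2) ≤ π ^ (m + 2) * cosMoment n 0 / (2 * n + 2) := by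
  calc cosMoment n (m + 2)
      ≤ ∫ x in (0 : ℝ)..π / 2, π ^ (m + 2) * (cos x ^ (2 * n) * sin x ^ 2) := by
        refine intervalIntegral.integral_mono_on (by positivity)
          (Continuous.intervalIntegrable (by fun_prop) _ _)
          (Continuous.intervalIntegrable (by fun_prop) _ _) fun x hx => ?_
        calc cos x ^ (2 * n) * expTwoTerm (m + 2) x
            ≤ cos x ^ (2 * n) * (π ^ (m + 2) * sin x ^ 2) :=
              mul_le_mul_of_nonneg_left (expTwoTerm_add_two_le hx.1 hx.2)
                ((even_two_mul n).pow_nonneg _)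
          _ = π ^ (m + 2) * (cos x ^ (2 * n) * sin x ^ 2) := by ring
    _ = π ^ (m + 2) * cosMoment n 0 / (2 * n + 2) := by
        rw [intervalIntegral.integral_const_mul, integral_cos_pow_mul_sin_sq, mul_div_assoc]

noncomputable def cosMomentRatio (n b : ℕ) : ℝ := cosMoment n (2 * b) / cosMoment n 0

lemma cosMomentRatio_zero (n : ℕ) : cosMomentRatio n 0 = 1 :=
  div_self (cosMoment_zero_pos n).ne'

lemma cosMomentRatio_nonneg (n b : ℕ) : 0 ≤ cosMomentRatio n b :=
  div_nonneg (cosMoment_nonneg n _) (cosMoment_nonneg n 0)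

lemma cosMomentRatio_succ (n b : ℕ) :
    cosMomentRatio n (b + 1)
      = cosMomentRatio (n + 1) (b + 1) + cosMomentRatio (n + 1) b / ((n : ℝ) + 1) ^ 2 := by
  have := (cosMoment_zero_pos n).ne'
  rw [cosMomentRatio, cosMomentRatio, cosMomentRatio, show 2 * (b + 1) = 2 * b + 2 from rfl,
    cosMoment_add_two, cosMoment_succ_zero]
  field_simp

lemma tendsto_cosMomentRatio_zero (b : ℕ) :
    Tendsto (fun N => cosMomentRatio N (b + 1)) atTop (𝓝 0) := by
  have hbound (N : ℕ) : cosMomentRatio N (b + 1) ≤ π ^ (2 * b + 2) / (2 * N + 2) := by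
    rw [cosMomentRatio, div_le_iff₀ (cosMoment_zero_pos N), div_mul_eq_mul_div]
    exact cosMoment_add_two_le N (2 * b)
  refine squeeze_zero (fun N => cosMomentRatio_nonneg N _) hbound
    (tendsto_const_nhds.div_atTop ?_)
  exact tendsto_atTop_add_const_right _ _
    (tendsto_natCast_atTop_atTop.const_mul_atTop two_pos)

theorem cos_even_moments (n b : ℕ) :
    (∫ x in (0:ℝ)..(π / 2), Real.cos x ^ (2 * n) *
        ((2 * x) ^ (2 * b) / (Nat.factorial (2 * b)))) =
      ((Nat.choose (2 * n) n : ℝ) / 4 ^ n) * (π / 2) * zetaTail b n := by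
  rw [zetaTail_eq_of_recurrence cosMomentRatio_zero cosMomentRatio_nonneg cosMomentRatio_succ
    tendsto_cosMomentRatio_zero, cosMomentRatio, ← cosMoment_zero,
    mul_div_cancel₀ _ (cosMoment_zero_pos n).ne']
  rfl
end
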